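/- For a tiled matrix of size p × q where p = 2^a and q = 2^b are both powers of two with q < p, the critical path length of the tiled BinaryTree algorithm (with TT kernels) equals (10 + 6 log₂ p) q − 4 log₂ p − 6. -/

import Mathlib

namespace TiledQR

/-- An elimination `elim(i, piv, k)`: tile `(i, k)` is zeroed out by an orthogonal
transformation combining row `i` with pivot row `piv`. -/
structure Elim where
  i : ℕ
  piv : ℕ
  k : ℕ
deriving DecidableEq

/-- `Before L e f` : the elimination `e` occurs strictly before `f` in the list `L`. -/
def Before (L : List Elim) (e f : Elim) : Prop :=
  ∃ a b : Fin L.length, (a : ℕ) < b ∧ L.get a = e ∧ L.get b = f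

/-- `L` is a valid elimination list for a `p × q` tiled matrix: it contains exactly one
elimination for every sub-diagonal tile `(i, k)` (`1 ≤ k ≤ min p q`, `k < i ≤ p`);
every elimination `elim(i, piv, k)` comes after all eliminations `elim(i, *, k')` and
`elim(piv, *, k')` with `k' < k`, and before the elimination `elim(piv, *, k)` of its
pivot row. -/
def ValidElimList (p q : ℕ) (L : List Elim) : Prop :=
  L.Nodup ∧
  (∀ e ∈ L, 1 ≤ e.k ∧ e.k ≤ min p q ∧ e.k < e.i ∧ e.i ≤ p ∧
      1 ≤ e.piv ∧ e.piv ≤ p ∧ e.piv ≠ e.i) ∧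
  (∀ i k, 1 ≤ k → k ≤ min p q → k < i → i ≤ p → ∃! piv, Elim.mk i piv k ∈ L) ∧
  (∀ a b : Fin L.length, (L.get b).k < (L.get a).k →
      ((L.get b).i = (L.get a).i ∨ (L.get b).i = (L.get a).piv) → (b : ℕ) < a) ∧
  (∀ a b : Fin L.length, (L.get b).k = (L.get a).k →
      (L.get b).i = (L.get a).piv → (a : ℕ) < b)

/-- The tasks of the tiled QR factorization with TT (triangle-on-top-of-triangle)
kernels. -/
inductive Task where
  | GEQRT (r k : ℕ)
  | UNMQR (r k j : ℕ)
  | TTQRT (i piv k : ℕ)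
  | TTMQR (i piv k j : ℕ)
deriving DecidableEq

/-- Weights of the TT kernels, the unit being `n_b ^ 3 / 3` flops. -/
def weight : Task → ℕ
  | .GEQRT _ _ => 4
  | .UNMQR _ _ _ => 6
  | .TTQRT _ _ _ => 2
  | .TTMQR _ _ _ _ => 6

/-- The tasks associated with a `p × q` tiled matrix and an elimination list `L`:
a factorization `GEQRT(r, k)` and updates `UNMQR(r, k, j)` (`k < j ≤ q`) for every tile
`(r, k)` with `k ≤ r ≤ p`, and, for every elimination `elim(i, piv, k)` of `L`, a task
`TTQRT(i, piv, k)` and updates `TTMQR(i, piv, k, j)` for `k < j ≤ q`. -/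
def InTasks (p q : ℕ) (L : List Elim) : Task → Prop
  | .GEQRT r k => 1 ≤ k ∧ k ≤ min p q ∧ k ≤ r ∧ r ≤ p
  | .UNMQR r k j => 1 ≤ k ∧ k ≤ min p q ∧ k ≤ r ∧ r ≤ p ∧ k < j ∧ j ≤ q
  | .TTQRT i piv k => Elim.mk i piv k ∈ L
  | .TTMQR i piv k j => Elim.mk i piv k ∈ L ∧ k < j ∧ j ≤ q

/-- The precedence (dependence) relation between the TT tasks.  Besides the flow
dependencies of the kernels, two tasks reading and writing a common tile
(a pivot tile reused by several eliminations of a column, or a pivot tile that is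
subsequently zeroed out) are serialized in the order of the elimination list. -/
inductive Prec (L : List Elim) : Task → Task → Prop
  | geqrt_unmqr (r k j : ℕ) :
      Prec L (.GEQRT r k) (.UNMQR r k j)
  | geqrt_ttqrt_row (i piv k : ℕ) :
      Prec L (.GEQRT i k) (.TTQRT i piv k)
  | geqrt_ttqrt_piv (i piv k : ℕ) :
      Prec L (.GEQRT piv k) (.TTQRT i piv k)
  | ttqrt_ttmqr (i piv k j : ℕ) :
      Prec L (.TTQRT i piv k) (.TTMQR i piv k j)
  | unmqr_ttmqr_row (i piv k j : ℕ) :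
      Prec L (.UNMQR i k j) (.TTMQR i piv k j)
  | unmqr_ttmqr_piv (i piv k j : ℕ) :
      Prec L (.UNMQR piv k j) (.TTMQR i piv k j)
  | ttmqr_geqrt (a b i k : ℕ) : 2 ≤ k → (a = i ∨ b = i) →
      Prec L (.TTMQR a b (k - 1) k) (.GEQRT i k)
  | ttqrt_serial (i i' piv k : ℕ) :
      Before L (Elim.mk i piv k) (Elim.mk i' piv k) →
      Prec L (.TTQRT i piv k) (.TTQRT i' piv k)
  | ttmqr_serial (i i' piv k j : ℕ) :
      Before L (Elim.mk i piv k) (Elim.mk i' piv k) →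
      Prec L (.TTMQR i piv k j) (.TTMQR i' piv k j)
  | ttqrt_pivot_use (a i piv k : ℕ) :
      Prec L (.TTQRT a i k) (.TTQRT i piv k)
  | ttmqr_pivot_use (a i piv k j : ℕ) :
      Prec L (.TTMQR a i k j) (.TTMQR i piv k j)

/-- A path in the weighted task DAG. -/
def IsPath (p q : ℕ) (L : List Elim) (path : List Task) : Prop :=
  (∀ t ∈ path, InTasks p q L t) ∧ path.Chain' (Prec L)

/-- The critical path length of the tiled algorithm given by the elimination list `L`:
the maximum total weight of a path in the weighted task DAG (equivalently, the makespan
of the earliest-start schedule with unboundedly many processors). -/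
noncomputable def cpLength (p q : ℕ) (L : List Elim) : ℕ :=
  sSup { w : ℕ | ∃ path : List Task, IsPath p q L path ∧ w = (path.map weight).sum }
/-- The elimination list of the tiled BinaryTree algorithm: in each column `k`, at
stage `s = 1, 2, …`, every row `i` such that `i - k` is an odd multiple of `2 ^ (s - 1)`
is zeroed out using pivot row `i - 2 ^ (s - 1)`; eliminations are listed column by
column and, within a column, by increasing stage. -/
def btList (p q : ℕ) : List Elim :=
  (List.range' 1 (min p q)).flatMap fun k =>
    (List.range' 1 p).flatMap fun s =>
      (List.range' (k + 1) (p - k)).filterMap fun i =>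
        if (i - k) % 2 ^ s = 2 ^ (s - 1) then some (Elim.mk i (i - 2 ^ (s - 1)) k)
        else none

/-! Row `i` is zeroed out in column `k` at stage `ν + 1` onto pivot row `i - 2 ^ ν`, where
`ν = ν₂(i - k)`; with `p ≤ 2 ^ a` every column therefore has at most `a` stages.

Upper bound: the potential `(k - 1) (10 + 6 a) + (cost of the stages of column `k` up to the
task)` increases by at least the weight of the target along every edge of the task graph and
never exceeds `(q - 1) (10 + 6 a) + 4 + 2 a`, so neither does the weight of any path.

Lower bound: in a column `k < q`, the `GEQRT` and `UNMQR` of row `k + 2 ^ (a - 1) - 1`, the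
`TTMQR`s of the rows `k + 2 ^ (a - 1) - 2 ^ t` (each the pivot of the previous one) and then
that of row `k + 2 ^ (a - 1)` onto pivot `k` form a chain of weight `10 + 6 a` feeding the
`GEQRT` of row `k + 2 ^ (a - 1)` in column `k + 1`; in the last column the same chain of
`TTQRT`s after a `GEQRT` weighs `4 + 2 a`. -/

theorem padicValNat_two_eq_iff_mod {n s : ℕ} (hn : n ≠ 0) :
    padicValNat 2 n = s ↔ n % 2 ^ (s + 1) = 2 ^ s := by
  have hmod : n % 2 ^ (s + 1) = n % 2 ^ s + 2 ^ s * (n / 2 ^ s % 2) := by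
    rw [pow_succ, Nat.mod_mul]
  have hlo : s ≤ padicValNat 2 n ↔ n % 2 ^ s = 0 := by
    rw [← padicValNat_dvd_iff_le hn, Nat.dvd_iff_mod_eq_zero]
  have hhi : s + 1 ≤ padicValNat 2 n ↔ n % 2 ^ (s + 1) = 0 := by
    rw [← padicValNat_dvd_iff_le hn, Nat.dvd_iff_mod_eq_zero]
  have hlt := Nat.mod_lt n (Nat.two_pow_pos s)
  have hbit : n / 2 ^ s % 2 < 2 := Nat.mod_lt _ two_pos
  rw [hmod] at hhi ⊢
  interval_cases n / 2 ^ s % 2 <;> omega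

theorem Before.lt_of_pairwise {α : Type*} [Preorder α] {L : List Elim} {f : Elim → α}
    (hL : L.Pairwise (f · < f ·)) {e e' : Elim} (h : Before L e e') : f e < f e' := by
  obtain ⟨a, b, hab, rfl, rfl⟩ := h
  exact List.pairwise_iff_get.mp hL a b hab

theorem before_of_pairwise {α : Type*} [Preorder α] {L : List Elim} {f : Elim → α}
    (hL : L.Pairwise (f · < f ·)) {e e' : Elim} (he : e ∈ L) (he' : e' ∈ L)
    (h : f e < f e') : Before L e e' := by
  obtain ⟨a, rfl⟩ := List.get_of_mem he
  obtain ⟨b, rfl⟩ := List.get_of_mem he'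
  rcases lt_trichotomy a b with hab | rfl | hba
  · exact ⟨a, b, hab, rfl, rfl⟩
  · exact absurd h (lt_irrefl _)
  · exact absurd (List.pairwise_iff_get.mp hL b a hba) (lt_asymm h)

section Paths

variable {p q : ℕ} {L : List Elim}

theorem sum_weight_le_of_potential (φ : Task → ℕ)
    (hweight : ∀ t, InTasks p q L t → weight t ≤ φ t)
    (hprec : ∀ t t', InTasks p q L t → InTasks p q L t' → Prec L t t' →
      φ t + weight t' ≤ φ t') {path : List Task} {t : Task}
    (hpath : IsPath p q L (path ++ [t])) : ((path ++ [t]).map weight).sum ≤ φ t := by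
  induction path using List.reverseRecOn generalizing t with
  | nil => simpa using hweight t (hpath.1 t (by simp))
  | append_singleton path s ih =>
    obtain ⟨hin, hchain⟩ := hpath
    rw [List.Chain', List.append_assoc, List.singleton_append,
      List.isChain_append_cons_cons] at hchain
    have hs := ih ⟨fun x hx => hin x (List.mem_append_left _ hx), hchain.1⟩
    have := hprec s t (hin s (by simp)) (hin t (by simp)) hchain.2.1
    simp only [List.map_append, List.sum_append, List.map_cons, List.map_nil, List.sum_cons,
      List.sum_nil] at hs ⊢
    omega

def HasPathTo (p q : ℕ) (L : List Elim) (t : Task) (w : ℕ) : Prop :=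
  ∃ path : List Task, IsPath p q L (path ++ [t]) ∧ ((path ++ [t]).map weight).sum = w

theorem HasPathTo.single {t : Task} (ht : InTasks p q L t) : HasPathTo p q L t (weight t) :=
  ⟨[], ⟨by simpa using ht, List.isChain_singleton t⟩, by simp⟩

theorem HasPathTo.snoc {t t' : Task} {w : ℕ} (h : HasPathTo p q L t w)
    (ht' : InTasks p q L t') (hprec : Prec L t t') : HasPathTo p q L t' (w + weight t') := by
  obtain ⟨path, ⟨hin, hchain⟩, rfl⟩ := h
  refine ⟨path ++ [t], ⟨fun x hx => ?_, ?_⟩, by simp [add_assoc]⟩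
  · rcases List.mem_append.mp hx with hx | hx
    · exact hin x hx
    · rwa [List.mem_singleton.mp hx]
  · rw [List.Chain', List.append_assoc, List.singleton_append, List.isChain_append_cons_cons]
    exact ⟨hchain, hprec, List.isChain_singleton t'⟩

theorem cpLength_eq_of_potential (φ : Task → ℕ) {C : ℕ} {t : Task}
    (hweight : ∀ t, InTasks p q L t → weight t ≤ φ t)
    (hprec : ∀ t t', InTasks p q L t → InTasks p q L t' → Prec L t t' →
      φ t + weight t' ≤ φ t')
    (hle : ∀ t, InTasks p q L t → φ t ≤ C) (hpath : HasPathTo p q L t C) :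
    cpLength p q L = C := by
  have hbound : C ∈ upperBounds
      { w : ℕ | ∃ path : List Task, IsPath p q L path ∧ w = (path.map weight).sum } := by
    rintro w ⟨path, hp, rfl⟩
    rcases List.eq_nil_or_concat path with rfl | ⟨path, t, rfl⟩
    · simp
    · rw [List.concat_eq_append] at hp ⊢
      exact (sum_weight_le_of_potential φ hweight hprec hp).trans (hle t (hp.1 t (by simp)))
  obtain ⟨path, hp, hw⟩ := hpath
  exact le_antisymm (csSup_le' hbound) (le_csSup ⟨C, hbound⟩ ⟨_, hp, hw.symm⟩)

end Paths

/-- Row `i` is zeroed out in column `k` at stage `stage i k + 1` (stages of the paper count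
from `1`). -/
def stage (i k : ℕ) : ℕ := padicValNat 2 (i - k)

theorem two_pow_stage_le {i k : ℕ} (h : k < i) : 2 ^ stage i k ≤ i - k :=
  Nat.le_of_dvd (by omega) pow_padicValNat_dvd

theorem stage_lt_of_sub_lt_two_pow {i k a : ℕ} (h : k < i) (ha : i - k < 2 ^ a) :
    stage i k < a :=
  (Nat.pow_lt_pow_iff_right one_lt_two).mp ((two_pow_stage_le h).trans_lt ha)

theorem mem_btList_iff {p q i piv k : ℕ} :
    Elim.mk i piv k ∈ btList p q ↔
      1 ≤ k ∧ k ≤ min p q ∧ k < i ∧ i ≤ p ∧ piv = i - 2 ^ stage i k := by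
  simp only [btList, List.mem_flatMap, List.mem_filterMap, List.mem_range'_1,
    Option.ite_none_right_eq_some, Option.some.injEq, Elim.mk.injEq]
  constructor
  · rintro ⟨k, hk, s, hs, i, hi, hmod, rfl, rfl, rfl⟩
    have hstage : stage i k = s - 1 :=
      (padicValNat_two_eq_iff_mod (by omega)).mpr (by rwa [Nat.sub_add_cancel hs.1])
    exact ⟨hk.1, by omega, by omega, by omega, by rw [hstage]⟩
  · rintro ⟨hk, hkq, hki, hip, rfl⟩
    have hmod := (padicValNat_two_eq_iff_mod (by omega)).mp (rfl : stage i k = stage i k)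
    have hsp : stage i k < p :=
      (Nat.lt_two_pow_self.trans_le (two_pow_stage_le hki)).trans_le (by omega)
    exact ⟨k, by omega, stage i k + 1, by omega, i, by omega, hmod, rfl, rfl, rfl⟩

def btKey (e : Elim) : ℕ ×ₗ ℕ ×ₗ ℕ := toLex (e.k, toLex (stage e.i e.k, e.i))

theorem btList_pairwise (p q : ℕ) : (btList p q).Pairwise (btKey · < btKey ·) := by
  have hkey : ∀ {k s i e}, 1 ≤ s →
      (if (i - k) % 2 ^ s = 2 ^ (s - 1) then some (Elim.mk i (i - 2 ^ (s - 1)) k)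
        else none) = some e → btKey e = toLex (k, toLex (s - 1, i)) := by
    intro k s i e hs he
    split_ifs at he with hmod
    cases he
    have hik : i - k ≠ 0 := fun h => by
      rw [h, Nat.zero_mod] at hmod
      exact (Nat.two_pow_pos _).ne' hmod.symm
    rw [← Nat.sub_add_cancel hs] at hmod
    simp [btKey, stage, (padicValNat_two_eq_iff_mod hik).mpr hmod]
  simp only [btList, List.pairwise_flatMap, List.pairwise_filterMap, List.mem_filterMap,
    List.mem_flatMap]
  refine ⟨fun k _ => ⟨fun s hs => ?_, ?_⟩, ?_⟩
  · have hs1 : 1 ≤ s := (List.mem_range'_1.mp hs).1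
    refine List.Pairwise.imp (fun hii' b hb b' hb' => ?_) List.pairwise_lt_range'
    rw [hkey hs1 hb, hkey hs1 hb', Prod.Lex.toLex_lt_toLex, Prod.Lex.toLex_lt_toLex]
    omega
  · refine List.Pairwise.imp_of_mem (fun hs hs' hss' b hb b' hb' => ?_) List.pairwise_lt_range'
    obtain ⟨i, -, hb⟩ := hb
    obtain ⟨i', -, hb'⟩ := hb'
    have hs1 := (List.mem_range'_1.mp hs).1
    have hs1' := (List.mem_range'_1.mp hs').1
    rw [hkey hs1 hb, hkey hs1' hb', Prod.Lex.toLex_lt_toLex, Prod.Lex.toLex_lt_toLex]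
    omega
  · refine List.Pairwise.imp (fun hkk' b hb b' hb' => ?_) List.pairwise_lt_range'
    obtain ⟨s, hs, i, -, hb⟩ := hb
    obtain ⟨s', hs', i', -, hb'⟩ := hb'
    rw [hkey (List.mem_range'_1.mp hs).1 hb, hkey (List.mem_range'_1.mp hs').1 hb',
      Prod.Lex.toLex_lt_toLex]
    exact Or.inl hkk'

theorem stage_lt_of_before {p q i i' piv k : ℕ} (he : Elim.mk i piv k ∈ btList p q)
    (he' : Elim.mk i' piv k ∈ btList p q)
    (h : Before (btList p q) (Elim.mk i piv k) (Elim.mk i' piv k)) :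
    stage i k < stage i' k := by
  have hkey := h.lt_of_pairwise (btList_pairwise p q)
  rw [mem_btList_iff] at he he'
  have := two_pow_stage_le he.2.2.1
  have := two_pow_stage_le he'.2.2.1
  simp only [btKey, Prod.Lex.toLex_lt_toLex] at hkey
  rcases hkey with hk | ⟨-, hs | ⟨hs, hi⟩⟩
  · omega
  · exact hs
  · -- equal stages onto the same pivot would force `i = i'`
    rw [hs] at he
    omega

theorem stage_lt_of_pivot {p q i' i piv k : ℕ} (h : Elim.mk i' i k ∈ btList p q)
    (hpiv : Elim.mk i piv k ∈ btList p q) : stage i' k < stage i k := by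
  rw [mem_btList_iff] at h hpiv
  obtain ⟨-, -, hki', -, rfl⟩ := h
  have hmod : (i' - k) % 2 ^ (stage i' k + 1) = 2 ^ stage i' k :=
    (padicValNat_two_eq_iff_mod (by omega)).mp rfl
  have hdiv := Nat.div_add_mod (i' - k) (2 ^ (stage i' k + 1))
  have hdvd : 2 ^ (stage i' k + 1) ∣ i' - 2 ^ stage i' k - k :=
    ⟨(i' - k) / 2 ^ (stage i' k + 1), by omega⟩
  exact (padicValNat_dvd_iff_le (by omega)).mp hdvd

/-- An upper bound on the earliest finish time of each task of `btList p q` when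
`p ≤ 2 ^ a`: each column takes at most `10 + 6 a` (`GEQRT`, `UNMQR`, then one `TTMQR` per
level of a reduction tree of depth at most `a`), and an elimination at stage `s` waits for
the `s` stages before it. -/
def btPotential (a : ℕ) : Task → ℕ
  | .GEQRT _ k => (k - 1) * (10 + 6 * a) + 4
  | .UNMQR _ k _ => (k - 1) * (10 + 6 * a) + 10
  | .TTQRT i _ k => (k - 1) * (10 + 6 * a) + 4 + 2 * (stage i k + 1)
  | .TTMQR i _ k _ => (k - 1) * (10 + 6 * a) + 10 + 6 * (stage i k + 1)

section Potential

variable {p q a : ℕ}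

theorem weight_le_btPotential (t : Task) : weight t ≤ btPotential a t := by
  cases t <;> simp only [weight, btPotential] <;> omega

theorem stage_lt_of_mem_btList (hp : p ≤ 2 ^ a) {i piv k : ℕ}
    (h : Elim.mk i piv k ∈ btList p q) : stage i k < a :=
  have hi := mem_btList_iff.mp h
  stage_lt_of_sub_lt_two_pow hi.2.2.1 (by omega)

theorem btPotential_add_weight_le (hp : p ≤ 2 ^ a) {t t' : Task}
    (ht : InTasks p q (btList p q) t) (ht' : InTasks p q (btList p q) t')
    (hprec : Prec (btList p q) t t') : btPotential a t + weight t' ≤ btPotential a t' := by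
  cases hprec with
  | ttmqr_geqrt _ _ _ k hk =>
    have hstage := stage_lt_of_mem_btList hp ht.1
    have hcol := Nat.sub_one_mul (k - 1) (10 + 6 * a)
    have hpos : 10 + 6 * a ≤ (k - 1) * (10 + 6 * a) := Nat.le_mul_of_pos_left _ (by omega)
    simp only [btPotential, weight, Nat.sub_sub] at hcol ⊢
    omega
  | ttqrt_serial _ _ _ _ hb =>
    have := stage_lt_of_before ht ht' hb
    simp only [btPotential, weight]
    omega
  | ttmqr_serial _ _ _ _ _ hb =>
    have := stage_lt_of_before ht.1 ht'.1 hb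
    simp only [btPotential, weight]
    omega
  | ttqrt_pivot_use =>
    have := stage_lt_of_pivot ht ht'
    simp only [btPotential, weight]
    omega
  | ttmqr_pivot_use =>
    have := stage_lt_of_pivot ht.1 ht'.1
    simp only [btPotential, weight]
    omega
  | _ => simp only [btPotential, weight]; omega

theorem btPotential_le (hp : p ≤ 2 ^ a) {t : Task} (ht : InTasks p q (btList p q) t) :
    btPotential a t ≤ (q - 1) * (10 + 6 * a) + 4 + 2 * a := by
  have hcol {k : ℕ} (hkq : k ≤ q) : (k - 1) * (10 + 6 * a) ≤ (q - 1) * (10 + 6 * a) :=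
    Nat.mul_le_mul_right _ (by omega)
  have hcol_succ {k : ℕ} (hk : 1 ≤ k) (hkq : k < q) :
      (k - 1) * (10 + 6 * a) + (10 + 6 * a) ≤ (q - 1) * (10 + 6 * a) := by
    rw [← Nat.succ_mul, Nat.succ_eq_add_one, Nat.sub_add_cancel hk]
    exact Nat.mul_le_mul_right _ (by omega)
  cases t with
  | GEQRT r k =>
    have := hcol (k := k) (ht.2.1.trans (min_le_right p q))
    simp only [btPotential]
    omega
  | UNMQR r k j =>
    have := hcol_succ (k := k) ht.1 (by simp only [InTasks] at ht; omega)
    simp only [btPotential]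
    omega
  | TTQRT i piv k =>
    have := hcol (k := k) ((mem_btList_iff.mp ht).2.1.trans (min_le_right p q))
    have := stage_lt_of_mem_btList hp ht
    simp only [btPotential]
    omega
  | TTMQR i piv k j =>
    have hk := (mem_btList_iff.mp ht.1).1
    have := hcol_succ (k := k) hk (by simp only [InTasks] at ht; omega)
    have := stage_lt_of_mem_btList hp ht.1
    simp only [btPotential]
    omega

end Potential

theorem stage_add_two_pow (k n : ℕ) : stage (k + 2 ^ n) k = n := by
  rw [stage, Nat.add_sub_cancel_left, padicValNat.prime_pow]

theorem stage_add_two_pow_sub_two_pow {k n t : ℕ} (ht : t < n) :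
    stage (k + 2 ^ n - 2 ^ t) k = t := by
  obtain ⟨m, rfl⟩ := Nat.exists_eq_add_of_lt ht
  have hsplit : k + 2 ^ (t + m + 1) - 2 ^ t - k = 2 ^ t + 2 ^ (t + 1) * (2 ^ m - 1) := by
    have hpow : 2 ^ (t + m + 1) = 2 ^ (t + 1) * 2 ^ m := by
      rw [← pow_add, Nat.add_right_comm]
    have hle : 2 ^ (t + 1) ≤ 2 ^ (t + 1) * 2 ^ m := Nat.le_mul_of_pos_right _ (by positivity)
    have hdouble : 2 ^ (t + 1) = 2 * 2 ^ t := by rw [pow_succ, mul_comm]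
    rw [Nat.mul_sub_one, hpow]
    omega
  rw [stage, hsplit, padicValNat_two_eq_iff_mod (by positivity), Nat.add_mul_mod_self_left,
    Nat.mod_eq_of_lt (Nat.pow_lt_pow_right one_lt_two t.lt_succ_self)]

section Witness

variable {p q n k : ℕ}

theorem mk_add_two_pow_mem_btList (hk : 1 ≤ k) (hkq : k ≤ min p q) (hkp : k + 2 ^ n ≤ p) :
    Elim.mk (k + 2 ^ n) k k ∈ btList p q :=
  mem_btList_iff.mpr ⟨hk, hkq, Nat.lt_add_of_pos_right (Nat.two_pow_pos n), hkp,
    by rw [stage_add_two_pow]; omega⟩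

theorem mk_add_two_pow_sub_two_pow_mem_btList (hk : 1 ≤ k) (hkq : k ≤ min p q)
    (hkp : k + 2 ^ n ≤ p) {t : ℕ} (ht : t < n) :
    Elim.mk (k + 2 ^ n - 2 ^ t) (k + 2 ^ n - 2 ^ (t + 1)) k ∈ btList p q := by
  have hlt : 2 ^ t < 2 ^ n := Nat.pow_lt_pow_right one_lt_two ht
  have hdouble : 2 ^ (t + 1) = 2 * 2 ^ t := by rw [pow_succ, mul_comm]
  exact mem_btList_iff.mpr ⟨hk, hkq, by omega, by omega,
    by rw [stage_add_two_pow_sub_two_pow ht]; omega⟩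

theorem before_btList_of_stage_lt {i piv i' piv' : ℕ} (he : Elim.mk i piv k ∈ btList p q)
    (he' : Elim.mk i' piv' k ∈ btList p q) (h : stage i k < stage i' k) :
    Before (btList p q) (Elim.mk i piv k) (Elim.mk i' piv' k) :=
  before_of_pairwise (btList_pairwise p q) he he' <| by
    simp [btKey, Prod.Lex.toLex_lt_toLex, h]

/-- `K i piv` is the kernel of `elim(i, piv, k)` in one column of tiles (`TTQRT`, or `TTMQR`
for a fixed `j`). The rows `k + 2 ^ n - 2 ^ t`, `t < n`, each the pivot of the previous one,
climb the left half of the reduction tree to an elimination onto row `k`, which precedes the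
elimination of row `k + 2 ^ n` onto the same pivot. -/
theorem hasPathTo_reduction {c w : ℕ} {K : ℕ → ℕ → Task} {τ : Task}
    (hk : 1 ≤ k) (hkq : k ≤ min p q) (hkp : k + 2 ^ n ≤ p)
    (hK : ∀ i piv, Elim.mk i piv k ∈ btList p q → InTasks p q (btList p q) (K i piv))
    (hKw : ∀ i piv, weight (K i piv) = c)
    (hpivot : ∀ i' i piv, Prec (btList p q) (K i' i) (K i piv))
    (hserial : ∀ i i' piv, Before (btList p q) (Elim.mk i piv k) (Elim.mk i' piv k) →
      Prec (btList p q) (K i piv) (K i' piv))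
    (hstart : ∀ i piv, (i = k + 2 ^ n - 1 ∨ piv = k + 2 ^ n - 1) →
      Prec (btList p q) τ (K i piv))
    (hτ : HasPathTo p q (btList p q) τ w) :
    HasPathTo p q (btList p q) (K (k + 2 ^ n) k) (w + (n + 1) * c) := by
  have hsnoc {t : Task} {w i piv : ℕ} (h : HasPathTo p q (btList p q) t w)
      (hmem : Elim.mk i piv k ∈ btList p q) (hprec : Prec (btList p q) t (K i piv)) :
      HasPathTo p q (btList p q) (K i piv) (w + c) :=
    hKw i piv ▸ h.snoc (hK i piv hmem) hprec
  have htop := mk_add_two_pow_mem_btList hk hkq hkp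
  rcases n with _ | m
  · simpa using hsnoc hτ htop (hstart _ _ (Or.inr (by simp)))
  have hmem {t : ℕ} (ht : t ≤ m) := mk_add_two_pow_sub_two_pow_mem_btList hk hkq hkp (t := t)
    (by omega)
  have hchain : ∀ t ≤ m, HasPathTo p q (btList p q)
      (K (k + 2 ^ (m + 1) - 2 ^ t) (k + 2 ^ (m + 1) - 2 ^ (t + 1))) (w + (t + 1) * c) := by
    intro t ht
    induction t with
    | zero => simpa using hsnoc hτ (hmem ht) (hstart _ _ (Or.inl (by simp)))
    | succ t ih =>
      convert hsnoc (ih (by omega)) (hmem ht) (hpivot _ _ _) using 1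
      ring
  have hlast := hchain m le_rfl
  have hmem_last := hmem (le_refl m)
  rw [Nat.add_sub_cancel] at hlast hmem_last
  have hbefore := before_btList_of_stage_lt hmem_last htop (by
    rw [stage_add_two_pow_sub_two_pow m.lt_succ_self, stage_add_two_pow]; exact m.lt_succ_self)
  convert hsnoc hlast htop (hserial _ _ _ hbefore) using 1
  ring

theorem hasPathTo_ttqrt_top (hk : 1 ≤ k) (hkq : k ≤ min p q) (hkp : k + 2 ^ n ≤ p) {w : ℕ}
    (h : HasPathTo p q (btList p q) (.GEQRT (k + 2 ^ n - 1) k) w) :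
    HasPathTo p q (btList p q) (.TTQRT (k + 2 ^ n) k k) (w + (n + 1) * 2) :=
  hasPathTo_reduction (K := fun i piv => .TTQRT i piv k) hk hkq hkp (fun _ _ h => h)
    (fun _ _ => rfl) (fun _ _ _ => .ttqrt_pivot_use _ _ _ _) (fun _ _ _ => .ttqrt_serial _ _ _ _)
    (by rintro i piv (rfl | rfl); exacts [.geqrt_ttqrt_row _ _ _, .geqrt_ttqrt_piv _ _ _]) h

theorem hasPathTo_geqrt_succ (hk : 1 ≤ k) (hkq : k < q) (hkp : k + 2 ^ n ≤ p) {w : ℕ}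
    (h : HasPathTo p q (btList p q) (.GEQRT (k + 2 ^ n - 1) k) w) :
    HasPathTo p q (btList p q) (.GEQRT (k + 2 ^ n) (k + 1)) (w + (10 + 6 * (n + 1))) := by
  have := Nat.two_pow_pos n
  have hkq' : k ≤ min p q := le_min (by omega) hkq.le
  have hunmqr := h.snoc (t' := .UNMQR (k + 2 ^ n - 1) k (k + 1))
    ⟨hk, hkq', by omega, by omega, by omega, by omega⟩ (.geqrt_unmqr _ _ _)
  have httmqr := hasPathTo_reduction (K := fun i piv => .TTMQR i piv k (k + 1)) hk hkq' hkp
    (fun _ _ h => ⟨h, k.lt_succ_self, hkq⟩) (fun _ _ => rfl)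
    (fun _ _ _ => .ttmqr_pivot_use _ _ _ _ _) (fun _ _ _ => .ttmqr_serial _ _ _ _ _)
    (by rintro i piv (rfl | rfl); exacts [.unmqr_ttmqr_row _ _ _ _, .unmqr_ttmqr_piv _ _ _ _])
    hunmqr
  have hgeqrt := httmqr.snoc (t' := .GEQRT (k + 2 ^ n) (k + 1))
    (by exact ⟨by omega, le_min (by omega) hkq, by omega, hkp⟩)
    (.ttmqr_geqrt (k + 2 ^ n) k (k + 2 ^ n) (k + 1) (by omega) (Or.inl rfl))
  convert hgeqrt using 1
  simp only [weight]
  ring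

theorem hasPathTo_geqrt (hqp : q + 2 ^ n ≤ p) (hk : 1 ≤ k) (hkq : k ≤ q) :
    HasPathTo p q (btList p q) (.GEQRT (k + 2 ^ n - 1) k) ((k - 1) * (10 + 6 * (n + 1)) + 4) := by
  have := Nat.two_pow_pos n
  induction k, hk using Nat.le_induction with
  | base =>
    have hin : InTasks p q (btList p q) (.GEQRT (1 + 2 ^ n - 1) 1) :=
      ⟨le_rfl, le_min (by omega) hkq, by omega, by omega⟩
    simpa [weight] using HasPathTo.single hin
  | succ k hk ih =>
    have := hasPathTo_geqrt_succ hk hkq (by omega) (ih (by omega))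
    rw [Nat.add_right_comm, Nat.add_sub_cancel, Nat.add_sub_cancel]
    convert this using 1
    rw [Nat.add_right_comm, ← Nat.succ_mul, Nat.succ_eq_add_one, Nat.sub_add_cancel hk]

end Witness

theorem cpLength_btList (hq : 1 ≤ q) (hqp : q + 2 ^ n ≤ p) (hp : p ≤ 2 ^ (n + 1)) :
    cpLength p q (btList p q) = (q - 1) * (10 + 6 * (n + 1)) + 4 + 2 * (n + 1) := by
  refine cpLength_eq_of_potential (btPotential (n + 1)) (t := .TTQRT (q + 2 ^ n) q q)
    (fun t _ => weight_le_btPotential t) (fun _ _ => btPotential_add_weight_le hp)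
    (fun _ => btPotential_le hp) ?_
  convert hasPathTo_ttqrt_top (k := q) hq (le_min (by omega) le_rfl) hqp
    (hasPathTo_geqrt hqp hq le_rfl) using 1
  ring

/-- For a `p × q` tiled matrix where `p = 2 ^ a` and `q = 2 ^ b` are both powers of two
with `q < p`, the critical path length of the tiled BinaryTree algorithm (with TT
kernels) equals `(10 + 6 log₂ p) q - 4 log₂ p - 6`. -/
theorem binaryTree_cpLength_pow_two (a b : ℕ) (h : 2 ^ b < 2 ^ a) :
    cpLength (2 ^ a) (2 ^ b) (btList (2 ^ a) (2 ^ b)) =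
      (10 + 6 * a) * 2 ^ b - 4 * a - 6 := by
  have hba : b < a := (Nat.pow_lt_pow_iff_right one_lt_two).mp h
  obtain ⟨n, rfl⟩ : ∃ n, a = n + 1 := ⟨a - 1, by omega⟩
  have hq : 2 ^ b ≤ 2 ^ n := Nat.pow_le_pow_right two_pos (by omega)
  rw [cpLength_btList Nat.one_le_two_pow (by rw [pow_succ]; omega) le_rfl]
  have hcol : 10 + 6 * (n + 1) ≤ 2 ^ b * (10 + 6 * (n + 1)) :=
    Nat.le_mul_of_pos_left _ (Nat.two_pow_pos b)
  rw [Nat.sub_one_mul, Nat.mul_comm (10 + 6 * (n + 1))]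
  omega

end TiledQR
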